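/- arXiv:1106.0412 — 2 statements merged into one kernel-verified Lean document; each statement's English description precedes it below -/
import Mathlib

section
/- Let ι_Y : A → Y be a map. Then secat(ι_Y) ≤ n if and only if ι_Y is simply dominated by some map ι_X : A → X with Pushcat(ι_X) ≤ n; and relcat(ι_Y) ≤ n if and only if ι_Y is relatively dominated by some map ι_X : A → X with Pushcat(ι_X) ≤ n. -/
open unitInterval

universe u

noncomputable section

/-- A continuous map is a homotopy equivalence. -/
def IsHEquiv {X Y : Type u} [TopologicalSpace X] [TopologicalSpace Y] (f : C(X, Y)) : Prop :=
  ∃ g : C(Y, X), (f.comp g).Homotopic (ContinuousMap.id Y) ∧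
    (g.comp f).Homotopic (ContinuousMap.id X)

section HPO

variable {Z A B P : Type u} [TopologicalSpace Z] [TopologicalSpace A] [TopologicalSpace B]
  [TopologicalSpace P]

/-- Gluing relation of the double mapping cylinder. -/
inductive HPORel (f : C(Z, A)) (g : C(Z, B)) :
    (A ⊕ ((Z × I) ⊕ B)) → (A ⊕ ((Z × I) ⊕ B)) → Prop
  | left (z : Z) : HPORel f g (Sum.inl (f z)) (Sum.inr (Sum.inl (z, 0)))
  | right (z : Z) : HPORel f g (Sum.inr (Sum.inl (z, 1))) (Sum.inr (Sum.inr (g z)))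

/-- The double mapping cylinder (standard homotopy pushout) of `f : Z → A` and `g : Z → B`. -/
def HPO (f : C(Z, A)) (g : C(Z, B)) : Type u := Quot (HPORel f g)

instance (f : C(Z, A)) (g : C(Z, B)) : TopologicalSpace (HPO f g) :=
  inferInstanceAs (TopologicalSpace (Quot _))

/-- Left structural map of the homotopy pushout. -/
def HPO.inl (f : C(Z, A)) (g : C(Z, B)) : C(A, HPO f g) :=
  ⟨fun a => Quot.mk _ (Sum.inl a), continuous_quot_mk.comp continuous_inl⟩

/-- Right structural map of the homotopy pushout. -/
def HPO.inr (f : C(Z, A)) (g : C(Z, B)) : C(B, HPO f g) :=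
  ⟨fun b => Quot.mk _ (Sum.inr (Sum.inr b)),
    continuous_quot_mk.comp (continuous_inr.comp continuous_inr)⟩

/-- Cylinder part of the homotopy pushout. -/
def HPO.cyl (f : C(Z, A)) (g : C(Z, B)) : C(Z × I, HPO f g) :=
  ⟨fun zt => Quot.mk _ (Sum.inr (Sum.inl zt)),
    continuous_quot_mk.comp (continuous_inr.comp continuous_inl)⟩

/-- The whisker map induced on the double mapping cylinder by a homotopy commutative square. -/
def HPO.desc (f : C(Z, A)) (g : C(Z, B)) (h : C(A, P)) (k : C(B, P))
    (H : ContinuousMap.Homotopy (h.comp f) (k.comp g)) : C(HPO f g, P) :=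
  ⟨Quot.lift (Sum.elim h (Sum.elim (fun zt => H (zt.2, zt.1)) k))
    (by
      rintro x y (⟨z⟩ | ⟨z⟩)
      · simp only [Sum.elim_inl, Sum.elim_inr]; exact (H.apply_zero z).symm
      · simp only [Sum.elim_inl, Sum.elim_inr]; exact H.apply_one z),
    continuous_quot_lift _ (by
      apply Continuous.sumElim h.continuous
      apply Continuous.sumElim _ k.continuous
      exact H.continuous.comp continuous_swap)⟩

/-- The square with legs `f, g` and cone maps `h, k` is a homotopy pushout. -/
def IsHPO (f : C(Z, A)) (g : C(Z, B)) (h : C(A, P)) (k : C(B, P)) : Prop :=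
  ∃ H : ContinuousMap.Homotopy (h.comp f) (k.comp g), IsHEquiv (HPO.desc f g h k H)

end HPO

section HPB

variable {A B X P : Type u} [TopologicalSpace A] [TopologicalSpace B] [TopologicalSpace X]
  [TopologicalSpace P]

/-- The standard homotopy pullback of `f : A → X` and `g : B → X`. -/
def HPB (f : C(A, X)) (g : C(B, X)) : Type u :=
  { p : A × C(I, X) × B // p.2.1 0 = f p.1 ∧ p.2.1 1 = g p.2.2 }

instance (f : C(A, X)) (g : C(B, X)) : TopologicalSpace (HPB f g) :=
  inferInstanceAs (TopologicalSpace (Subtype _))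

/-- First projection of the homotopy pullback. -/
def HPB.fst (f : C(A, X)) (g : C(B, X)) : C(HPB f g, A) :=
  ⟨fun p => p.1.1, continuous_fst.comp continuous_subtype_val⟩

/-- Second projection of the homotopy pullback. -/
def HPB.snd (f : C(A, X)) (g : C(B, X)) : C(HPB f g, B) :=
  ⟨fun p => p.1.2.2, continuous_snd.comp (continuous_snd.comp continuous_subtype_val)⟩

/-- The tautological homotopy over the homotopy pullback. -/
def HPB.pathHomotopy (f : C(A, X)) (g : C(B, X)) :
    ContinuousMap.Homotopy (g.comp (HPB.snd f g)) (f.comp (HPB.fst f g)) where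
  toFun := fun q => q.2.1.2.1 (σ q.1)
  continuous_toFun := by
    have h1 : Continuous fun q : I × HPB f g => (q.2.1.2.1, σ q.1) := by
      refine Continuous.prodMk ?_ (continuous_symm.comp continuous_fst)
      exact (continuous_fst.comp (continuous_snd.comp continuous_subtype_val)).comp continuous_snd
    exact ContinuousEval.continuous_eval.comp h1
  map_zero_left := fun p => by simp [HPB.snd, p.2.2]
  map_one_left := fun p => by simp [HPB.fst, p.2.1]

/-- The comparison (whisker) map into the homotopy pullback. -/
def HPB.lift (f : C(A, X)) (g : C(B, X)) (p : C(P, A)) (q : C(P, B))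
    (H : ContinuousMap.Homotopy (f.comp p) (g.comp q)) : C(P, HPB f g) :=
  ⟨fun y => ⟨(p y, ((H.toContinuousMap.comp ⟨Prod.swap, continuous_swap⟩).curry y, q y)),
      by simp⟩,
    by
      apply Continuous.subtype_mk
      exact p.continuous.prodMk
        (((H.toContinuousMap.comp ⟨Prod.swap, continuous_swap⟩).curry).continuous.prodMk
          q.continuous)⟩

/-- The square with cospan `f, g` and cone maps `p, q` is a homotopy pullback. -/
def IsHPB (f : C(A, X)) (g : C(B, X)) (p : C(P, A)) (q : C(P, B)) : Prop :=
  ∃ H : ContinuousMap.Homotopy (f.comp p) (g.comp q), IsHEquiv (HPB.lift f g p q H)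

end HPB

/-- One step of the Ganea construction: a space over `X` under `A`. -/
structure GaneaStep (A X : Type u) [TopologicalSpace A] [TopologicalSpace X] where
  G : Type u
  inst : TopologicalSpace G
  g : @ContinuousMap G X inst _
  α : @ContinuousMap A G _ inst

attribute [instance] GaneaStep.inst

/-- The Ganea construction of a map `ι : A → X`. -/
def ganea {A X : Type u} [TopologicalSpace A] [TopologicalSpace X] (ι : C(A, X)) :
    ℕ → GaneaStep A X
  | 0 => { G := A, inst := inferInstance, g := ι, α := ContinuousMap.id A }
  | n + 1 =>
    let s := ganea ι n
    { G := HPO (HPB.snd s.g ι) (HPB.fst s.g ι)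
      inst := inferInstance
      g := HPO.desc (HPB.snd s.g ι) (HPB.fst s.g ι) ι s.g (HPB.pathHomotopy s.g ι)
      α := HPO.inl (HPB.snd s.g ι) (HPB.fst s.g ι) }

/-- Least natural number (as `ℕ∞`) satisfying a predicate. -/
def theNat (P : ℕ → Prop) : ℕ∞ := sInf ((Nat.cast : ℕ → ℕ∞) '' { n | P n })

/-- `secat ι ≤ n` : the `n`-th Ganea map admits a homotopy section. -/
def secatLe {A X : Type u} [TopologicalSpace A] [TopologicalSpace X] (ι : C(A, X)) (n : ℕ) :
    Prop :=
  ∃ s : C(X, (ganea ι n).G), ((ganea ι n).g.comp s).Homotopic (ContinuousMap.id X)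

/-- `relcat ι ≤ n` : the `n`-th Ganea map admits a homotopy section compatible with `α_n`. -/
def relcatLe {A X : Type u} [TopologicalSpace A] [TopologicalSpace X] (ι : C(A, X)) (n : ℕ) :
    Prop :=
  ∃ s : C(X, (ganea ι n).G), ((ganea ι n).g.comp s).Homotopic (ContinuousMap.id X) ∧
    (s.comp ι).Homotopic (ganea ι n).α

/-- Sectional category (James), Ganea style. -/
def secat {A X : Type u} [TopologicalSpace A] [TopologicalSpace X] (ι : C(A, X)) : ℕ∞ :=
  theNat (secatLe ι)

/-- Relative category of a map. -/
def relcat {A X : Type u} [TopologicalSpace A] [TopologicalSpace X] (ι : C(A, X)) : ℕ∞ :=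
  theNat (relcatLe ι)

/-- `PushcatLe A X tX ι n` : `ι` is obtained from a homotopy equivalence by at most `n`
successive homotopy pushouts along maps to `A`. -/
inductive PushcatLe (A : Type u) [tA : TopologicalSpace A] :
    ∀ (X : Type u) (tX : TopologicalSpace X), @ContinuousMap A X tA tX → ℕ → Prop
  | equiv {X : Type u} [tX : TopologicalSpace X] (ι : C(A, X)) :
      IsHEquiv ι → PushcatLe A X tX ι 0
  | step {X X' Z : Type u} [tX : TopologicalSpace X] [tX' : TopologicalSpace X']
      [tZ : TopologicalSpace Z] {ι : C(A, X)} {n : ℕ} (h : PushcatLe A X tX ι n)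
      (ρ : C(Z, A)) (τ : C(Z, X)) (ι' : C(A, X')) (χ : C(X, X'))
      (hpo : IsHPO ρ τ ι' χ) (hχ : (χ.comp ι).Homotopic ι') :
      PushcatLe A X' tX' ι' (n + 1)
  | homotopic {X : Type u} [tX : TopologicalSpace X] {ι ι' : C(A, X)} {n : ℕ}
      (h : PushcatLe A X tX ι n) (hh : ι.Homotopic ι') : PushcatLe A X tX ι' n

/-- `RelcatLe` : as `PushcatLe`, with a compatible section at each step. -/
inductive RelcatLe (A : Type u) [tA : TopologicalSpace A] :
    ∀ (X : Type u) (tX : TopologicalSpace X), @ContinuousMap A X tA tX → ℕ → Prop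
  | equiv {X : Type u} [tX : TopologicalSpace X] (ι : C(A, X)) :
      IsHEquiv ι → RelcatLe A X tX ι 0
  | step {X X' Z : Type u} [tX : TopologicalSpace X] [tX' : TopologicalSpace X']
      [tZ : TopologicalSpace Z] {ι : C(A, X)} {n : ℕ} (h : RelcatLe A X tX ι n)
      (ρ : C(Z, A)) (τ : C(Z, X)) (ι' : C(A, X')) (χ : C(X, X'))
      (hpo : IsHPO ρ τ ι' χ) (hχ : (χ.comp ι).Homotopic ι')
      (σ₀ : C(A, Z)) (hσ : (ρ.comp σ₀).Homotopic (ContinuousMap.id A))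
      (hτσ : (τ.comp σ₀).Homotopic ι) :
      RelcatLe A X' tX' ι' (n + 1)
  | homotopic {X : Type u} [tX : TopologicalSpace X] {ι ι' : C(A, X)} {n : ℕ}
      (h : RelcatLe A X tX ι n) (hh : ι.Homotopic ι') : RelcatLe A X tX ι' n

/-- Strong pushout category of a map. -/
def Pushcat {A X : Type u} [tA : TopologicalSpace A] [tX : TopologicalSpace X]
    (ι : C(A, X)) : ℕ∞ :=
  theNat (fun n => PushcatLe A X tX ι n)

/-- Strong relative category of a map. -/
def Relcat {A X : Type u} [tA : TopologicalSpace A] [tX : TopologicalSpace X]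
    (ι : C(A, X)) : ℕ∞ :=
  theNat (fun n => RelcatLe A X tX ι n)

/-- Lusternik–Schnirelmann category (Ganea-normalized) of a pointed space. -/
def catP (X : Type u) [TopologicalSpace X] (x₀ : X) : ℕ∞ :=
  secat (ContinuousMap.const PUnit.{u + 1} x₀)

/-- Strong (Fox) category of a pointed space. -/
def CatP (X : Type u) [TopologicalSpace X] (x₀ : X) : ℕ∞ :=
  Relcat (ContinuousMap.const PUnit.{u + 1} x₀)

/-- `g : A → X` is the homotopy cofibre of `f : Y → A` (with cone point `x₀`). -/
def IsHCofiberPt {Y A X : Type u} [TopologicalSpace Y] [TopologicalSpace A] [TopologicalSpace X]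
    (f : C(Y, A)) (g : C(A, X)) (x₀ : X) : Prop :=
  IsHPO f (ContinuousMap.const Y (PUnit.unit : PUnit.{u + 1})) g
    (ContinuousMap.const PUnit.{u + 1} x₀)

/-- The diagonal map. -/
def diagMap (X : Type u) [TopologicalSpace X] : C(X, X × X) :=
  ⟨fun x => (x, x), continuous_id.prodMk continuous_id⟩

/-- Topological complexity (Farber, normalized). -/
def compl (X : Type u) [TopologicalSpace X] : ℕ∞ := secat (diagMap X)

/-- Strong complexity: strong relative category of the diagonal. -/
def Compl' (X : Type u) [TopologicalSpace X] : ℕ∞ := Relcat (diagMap X)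

end

noncomputable section
/-- `ιY` is simply dominated by `ιX`. -/
def SimplyDominatedBy {A Y X : Type u} [TopologicalSpace A] [TopologicalSpace Y]
    [TopologicalSpace X] (ιY : C(A, Y)) (ιX : C(A, X)) : Prop :=
  ∃ (φ : C(X, Y)) (s : C(Y, X)), (φ.comp ιX).Homotopic ιY ∧
    (φ.comp s).Homotopic (ContinuousMap.id Y)

/-- `ιY` is relatively dominated by `ιX`. -/
def RelDominatedBy {A Y X : Type u} [TopologicalSpace A] [TopologicalSpace Y]
    [TopologicalSpace X] (ιY : C(A, Y)) (ιX : C(A, X)) : Prop :=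
  ∃ (φ : C(X, Y)) (s : C(Y, X)), (φ.comp ιX).Homotopic ιY ∧
    (φ.comp s).Homotopic (ContinuousMap.id Y) ∧ (s.comp ιY).Homotopic ιX
end

/-! If `secat ιY ≤ n`, the `n`-th Ganea map `g_n : G_n → Y` with its homotopy section dominates
`ιY` through `α_n : A → G_n`, and `α_n` is built from `id_A` by `n` homotopy pushouts (the
fibre-cofibre steps of the construction). Conversely, a map `φ` with `φ ∘ ιX ≃ ιY` induces maps
`G_n(ιX) → G_n(ιY)` over `φ` commuting strictly with the `α`s, which transport (relative) sections
along a domination; so it suffices that `relcat ≤ Pushcat`. For one pushout step `X ← Z → A`, a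
homotopy section `σ₁` of `g_n` over `X` extends to a section of `g_{n+1}` over the double mapping
cylinder: a cylinder point `(z, t)` goes to the cylinder of `G_{n+1}` over the path
`g_n σ₁ τ z ⇝ inr τ z ⇝ inl ρ z`. -/

noncomputable section

open ContinuousMap

namespace ContinuousMap.Homotopy

variable {T Y : Type*} [TopologicalSpace T] [TopologicalSpace Y] {f₀ f₁ f₂ f₃ : C(T, Y)}

/-- For fixed `s`, the path `u ↦ shrinkToMiddleFun F G H (s, u, t)` runs along `F (·, t)` on
`[s, 1]`, then `G (·, t)`, then `H (·, t)` on `[0, 1 - s]`: the concatenation `F ⬝ G ⬝ H` at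
`s = 0`, and `G` at `s = 1`. -/
def shrinkToMiddleFun (F : Homotopy f₀ f₁) (G : Homotopy f₁ f₂) (H : Homotopy f₂ f₃)
    (p : I × I × T) : Y :=
  if (p.2.1 : ℝ) ≤ (1 - p.1) / 3 then F.extend (p.1 + 3 * p.2.1) p.2.2
  else if (p.2.1 : ℝ) ≤ (2 + p.1) / 3 then
    G.extend ((3 * p.2.1 - 1 + p.1) / (1 + 2 * p.1)) p.2.2
  else H.extend (3 * p.2.1 - 2 - p.1) p.2.2

variable (F : Homotopy f₀ f₁) (G : Homotopy f₁ f₂) (H : Homotopy f₂ f₃)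

lemma continuous_shrinkToMiddleFun : Continuous (shrinkToMiddleFun F G H) := by
  have hden : ∀ p : I × I × T, (1 + 2 * (p.1 : ℝ)) ≠ 0 := fun p => by
    have := p.1.2.1; positivity
  refine Continuous.if_le (F.continuous.comp (by fun_prop))
    (Continuous.if_le (G.continuous.comp (by fun_prop)) (H.continuous.comp (by fun_prop))
      (by fun_prop) (by fun_prop) fun p hp => ?_) (by fun_prop) (by fun_prop) fun p hp => ?_
  · rw [show (3 * (p.2.1 : ℝ) - 1 + p.1) / (1 + 2 * p.1) = 1 by
        rw [div_eq_one_iff_eq (hden p)]; linarith,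
      show 3 * (p.2.1 : ℝ) - 2 - p.1 = 0 by linarith, extend_one, extend_zero]
  · have hs : (0 : ℝ) ≤ p.1 := p.1.2.1
    rw [if_pos (by linarith), show (p.1 : ℝ) + 3 * p.2.1 = 1 by linarith,
      show (3 * (p.2.1 : ℝ) - 1 + p.1) / (1 + 2 * p.1) = 0 by
        rw [div_eq_zero_iff]; left; linarith,
      extend_one, extend_zero]

lemma shrinkToMiddleFun_left (s : I) (t : T) : shrinkToMiddleFun F G H (s, 0, t) = F (s, t) := by
  have : (s : ℝ) ≤ 1 := s.2.2
  rw [shrinkToMiddleFun, if_pos (by simp only [Set.Icc.coe_zero]; linarith), Set.Icc.coe_zero,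
    mul_zero, add_zero, extend_apply_coe]

lemma shrinkToMiddleFun_right (s : I) (t : T) :
    shrinkToMiddleFun F G H (s, 1, t) = H (σ s, t) := by
  have : (0 : ℝ) ≤ s := s.2.1
  simp only [shrinkToMiddleFun, Set.Icc.coe_one]
  rw [if_neg (by linarith)]
  split_ifs with h
  · obtain rfl : s = 1 :=
      Subtype.ext (le_antisymm s.2.2 (by simp only [Set.Icc.coe_one]; linarith))
    rw [symm_one, H.apply_zero, ← G.apply_one, ← extend_apply_coe]
    norm_num
  · rw [show 3 * 1 - 2 - (s : ℝ) = σ s by rw [coe_symm_eq]; ring, extend_apply_coe]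

lemma shrinkToMiddleFun_one (u : I) (t : T) : shrinkToMiddleFun F G H (1, u, t) = G (u, t) := by
  have : (0 : ℝ) ≤ u := u.2.1
  simp only [shrinkToMiddleFun, Set.Icc.coe_one]
  split_ifs with h
  · obtain rfl : u = 0 := Subtype.ext (by simp only [Set.Icc.coe_zero]; linarith)
    rw [G.apply_zero, ← F.apply_one, ← extend_apply_coe]
    norm_num
  · rw [show (3 * (u : ℝ) - 1 + 1) / (1 + 2 * 1) = u by ring, extend_apply_coe]
  · exact absurd u.2.2 (by linarith)

def trans₃ : Homotopy f₀ f₃ where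
  toFun x := shrinkToMiddleFun F G H (0, x)
  continuous_toFun := (continuous_shrinkToMiddleFun F G H).comp (by fun_prop)
  map_zero_left t := by rw [shrinkToMiddleFun_left, F.apply_zero]
  map_one_left t := by rw [shrinkToMiddleFun_right, symm_zero, H.apply_one]

def shrinkToMiddle : Homotopy (F.trans₃ G H).toContinuousMap G.toContinuousMap where
  toFun := shrinkToMiddleFun F G H
  continuous_toFun := continuous_shrinkToMiddleFun F G H
  map_zero_left _ := rfl
  map_one_left x := shrinkToMiddleFun_one F G H x.1 x.2

end ContinuousMap.Homotopy

namespace HPO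

variable {Z A B P : Type u} [TopologicalSpace Z] [TopologicalSpace A] [TopologicalSpace B]
  [TopologicalSpace P] (f : C(Z, A)) (g : C(Z, B))

lemma cyl_zero (z : Z) : cyl f g (z, 0) = inl f g (f z) :=
  (Quot.sound (HPORel.left z)).symm

lemma cyl_one (z : Z) : cyl f g (z, 1) = inr f g (g z) :=
  Quot.sound (HPORel.right z)

variable {f g} in
lemma ind {motive : HPO f g → Prop} (inl : ∀ a, motive (inl f g a))
    (cyl : ∀ z t, motive (cyl f g (z, t))) (inr : ∀ b, motive (inr f g b)) : ∀ x, motive x :=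
  Quot.ind fun
    | .inl a => inl a
    | .inr (.inl (z, t)) => cyl z t
    | .inr (.inr b) => inr b

def canonHomotopy : Homotopy ((inl f g).comp f) ((inr f g).comp g) where
  toFun p := cyl f g (p.2, p.1)
  map_zero_left := cyl_zero f g
  map_one_left := cyl_one f g

lemma isHPO_inl_inr : IsHPO f g (inl f g) (inr f g) := by
  have hid : desc f g (inl f g) (inr f g) (canonHomotopy f g) = ContinuousMap.id _ :=
    ContinuousMap.ext (ind (fun _ => rfl) (fun _ _ => rfl) (fun _ => rfl))
  exact ⟨canonHomotopy f g, ContinuousMap.id _, by rw [hid]; rfl, by rw [hid]; rfl⟩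

variable {Z' A' B' : Type u} [TopologicalSpace Z'] [TopologicalSpace A'] [TopologicalSpace B']
  (f' : C(Z', A')) (g' : C(Z', B'))

def map (ζ : C(Z, Z')) (α : C(A, A')) (β : C(B, B')) (hf : ∀ z, α (f z) = f' (ζ z))
    (hg : ∀ z, β (g z) = g' (ζ z)) : C(HPO f g, HPO f' g') :=
  ⟨Quot.lift
      (Sum.elim (inl f' g' ∘ α) (Sum.elim (fun p => cyl f' g' (ζ p.1, p.2)) (inr f' g' ∘ β)))
      (by
        rintro _ _ (⟨z⟩ | ⟨z⟩)
        · simp only [Sum.elim_inl, Sum.elim_inr, Function.comp_apply, hf, cyl_zero]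
        · simp only [Sum.elim_inl, Sum.elim_inr, Function.comp_apply, hg, cyl_one]),
    continuous_quot_lift _ <| by
      refine ((inl f' g').continuous.comp α.continuous).sumElim
        (Continuous.sumElim ?_ ((inr f' g').continuous.comp β.continuous))
      exact (cyl f' g').continuous.comp (by fun_prop)⟩

private def curryHomotopy {X : Type u} [TopologicalSpace X] {F₀ F₁ : C(X, P)}
    (H : Homotopy F₀ F₁) : C(X, C(I, P)) :=
  (H.toContinuousMap.comp prodSwap).curry

variable {f g} in
/-- The homotopy is glued as a map `HPO f g → C(I, P)`: this only needs `HPO f g` to carry the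
quotient topology, not `HPO f g × I`. -/
def homotopy {F G : C(HPO f g, P)} (HA : Homotopy (F.comp (inl f g)) (G.comp (inl f g)))
    (HB : Homotopy (F.comp (inr f g)) (G.comp (inr f g)))
    (HC : Homotopy (F.comp (cyl f g)) (G.comp (cyl f g)))
    (hA : ∀ s z, HC (s, (z, 0)) = HA (s, f z)) (hB : ∀ s z, HC (s, (z, 1)) = HB (s, g z)) :
    Homotopy F G :=
  let L : C(HPO f g, C(I, P)) :=
    ⟨Quot.lift (Sum.elim (curryHomotopy HA) (Sum.elim (curryHomotopy HC) (curryHomotopy HB)))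
      (by
        rintro _ _ (⟨z⟩ | ⟨z⟩) <;> ext s
        · exact (hA s z).symm
        · exact hB s z),
      continuous_quot_lift _ <| (curryHomotopy HA).continuous.sumElim
        ((curryHomotopy HC).continuous.sumElim (curryHomotopy HB).continuous)⟩
  { toFun p := L p.2 p.1
    continuous_toFun := L.uncurry.continuous.comp continuous_swap
    map_zero_left := ind (fun a => HA.apply_zero a) (fun z t => HC.apply_zero (z, t))
      (fun b => HB.apply_zero b)
    map_one_left := ind (fun a => HA.apply_one a) (fun z t => HC.apply_one (z, t))
      (fun b => HB.apply_one b) }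

end HPO

def HPB.homotopy {A B X : Type u} [TopologicalSpace A] [TopologicalSpace B] [TopologicalSpace X]
    (f : C(A, X)) (g : C(B, X)) : Homotopy (f.comp (HPB.fst f g)) (g.comp (HPB.snd f g)) where
  toFun p := p.2.1.2.1 p.1
  continuous_toFun := ContinuousEval.continuous_eval.comp
    (((continuous_fst.comp (continuous_snd.comp continuous_subtype_val)).comp
      continuous_snd).prodMk continuous_fst)
  map_zero_left p := p.2.1
  map_one_left p := p.2.2

lemma theNat_le_iff (P : ℕ → Prop) (n : ℕ) : theNat P ≤ n ↔ ∃ m ≤ n, P m := by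
  refine ⟨fun hle => ?_, fun ⟨m, hmn, hm⟩ =>
    (sInf_le (Set.mem_image_of_mem _ hm)).trans (Nat.cast_le.2 hmn)⟩
  by_contra! hP
  have : ((n + 1 : ℕ) : ℕ∞) ≤ theNat P := le_sInf fun _ ⟨m, hm, hmk⟩ =>
    hmk ▸ Nat.cast_le.2 (lt_of_not_ge fun hmn => hP m hmn hm)
  exact absurd (this.trans hle) (by norm_cast; omega)

section Domination

variable {A X Y : Type u} [TopologicalSpace A] [TopologicalSpace X] [TopologicalSpace Y]

lemma IsHEquiv.homotopic_of_comp {W : Type u} [TopologicalSpace W] {e : C(X, Y)}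
    (he : IsHEquiv e) {f₀ f₁ : C(W, X)} (h : (e.comp f₀).Homotopic (e.comp f₁)) :
    f₀.Homotopic f₁ := by
  obtain ⟨e', -, he'e⟩ := he
  have key : ∀ f : C(W, X), f.Homotopic (e'.comp (e.comp f)) := fun f => by
    simpa using (he'e.comp (Homotopic.refl f)).symm
  exact (key f₀).trans (((Homotopic.refl e').comp h).trans (key f₁).symm)

variable {ιX : C(A, X)} {ιY : C(A, Y)} {n : ℕ}

lemma relDominatedBy_of_isHEquiv {e : C(X, Y)} (he : IsHEquiv e)
    (heι : (e.comp ιX).Homotopic ιY) : RelDominatedBy ιY ιX := by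
  obtain ⟨e', hee', he'e⟩ := he
  refine ⟨e, e', heι, hee', ?_⟩
  simpa using ((Homotopic.refl e').comp heι.symm).trans (he'e.comp (.refl ιX))

lemma relcatLe.secatLe (h : relcatLe ιX n) : secatLe ιX n :=
  let ⟨s, hs, _⟩ := h
  ⟨s, hs⟩

lemma ganea_g_comp_α (ι : C(A, X)) (n : ℕ) : (ganea ι n).g.comp (ganea ι n).α = ι := by
  cases n <;> rfl

lemma ganea_inr_comp_α_homotopic (ι : C(A, X)) (n : ℕ) :
    ((HPO.inr (HPB.snd (ganea ι n).g ι) (HPB.fst (ganea ι n).g ι)).comp (ganea ι n).α).Homotopic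
      (ganea ι (n + 1)).α := by
  let constPath : C(A, HPB (ganea ι n).g ι) := HPB.lift _ _ (ganea ι n).α (ContinuousMap.id A)
    ((ContinuousMap.Homotopy.refl ι).cast (ganea_g_comp_α ι n).symm rfl)
  exact ⟨((HPO.canonHomotopy _ _).compContinuousMap constPath).symm⟩

lemma pushcatLe_ganea_α (ι : C(A, X)) : ∀ n, PushcatLe A (ganea ι n).G _ (ganea ι n).α n
  | 0 => .equiv _ ⟨ContinuousMap.id A, .refl _, .refl _⟩
  | n + 1 => .step (pushcatLe_ganea_α ι n) _ _ _ _ (HPO.isHPO_inl_inr _ _)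
      (ganea_inr_comp_α_homotopic ι n)

structure GaneaHom (ι : C(A, X)) (ι' : C(A, Y)) (φ : C(X, Y)) (n : ℕ) where
  Φ : C((ganea ι n).G, (ganea ι' n).G)
  homotopy : Homotopy ((ganea ι' n).g.comp Φ) (φ.comp (ganea ι n).g)
  comp_α : Φ.comp (ganea ι n).α = (ganea ι' n).α

namespace GaneaHom

variable {ι : C(A, X)} {ι' : C(A, Y)} {φ : C(X, Y)}

/-- On homotopy pullbacks, `(x, γ, a) ↦ (Φ x, D.homotopy x ⬝ φ ∘ γ ⬝ h a, a)`; the homotopy over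
`G_{n+1}` shrinks that path back to `φ ∘ γ`. -/
def succ (h : Homotopy (φ.comp ι) ι') (D : GaneaHom ι ι' φ n) : GaneaHom ι ι' φ (n + 1) :=
  let F := D.homotopy.compContinuousMap (HPB.fst (ganea ι n).g ι)
  let G := (ContinuousMap.Homotopy.refl φ).comp (HPB.homotopy (ganea ι n).g ι)
  let H := h.compContinuousMap (HPB.snd (ganea ι n).g ι)
  let ψ := HPB.lift (ganea ι' n).g ι' (D.Φ.comp (HPB.fst _ _)) (HPB.snd _ _) (F.trans₃ G H)
  let Φ := HPO.map _ _ _ _ ψ (ContinuousMap.id A) D.Φ (fun _ => rfl) (fun _ => rfl)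
  -- `g_{n+1}` runs along the path of a cylinder point backwards: `g (cyl (z, t)) = z.path (σ t)`
  let flip : C(HPB (ganea ι n).g ι × I, I × HPB (ganea ι n).g ι) :=
    ⟨fun p => (σ p.2, p.1), by fun_prop⟩
  { Φ := Φ
    homotopy := HPO.homotopy (F := (ganea ι' (n + 1)).g.comp Φ) (G := φ.comp (ganea ι (n + 1)).g)
      h.symm D.homotopy ((F.shrinkToMiddle G H).compContinuousMap flip)
      (fun s z => by
        change Homotopy.shrinkToMiddleFun F G H (s, σ 0, z) = _
        rw [unitInterval.symm_zero, Homotopy.shrinkToMiddleFun_right]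
        rfl)
      (fun s z => by
        change Homotopy.shrinkToMiddleFun F G H (s, σ 1, z) = _
        rw [unitInterval.symm_one, Homotopy.shrinkToMiddleFun_left]
        rfl)
    comp_α := rfl }

lemma homotopic_of_section (D : GaneaHom ι ι' φ n) {σ₀ : C(X, (ganea ι n).G)}
    (hσ : ((ganea ι n).g.comp σ₀).Homotopic (ContinuousMap.id X)) :
    ((ganea ι' n).g.comp (D.Φ.comp σ₀)).Homotopic φ :=
  (Homotopic.comp ⟨D.homotopy⟩ (.refl σ₀)).trans ((Homotopic.refl φ).comp hσ)

end GaneaHom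

def ganeaHom {ι : C(A, X)} {ι' : C(A, Y)} {φ : C(X, Y)} (h : Homotopy (φ.comp ι) ι') :
    ∀ n, GaneaHom ι ι' φ n
  | 0 => ⟨ContinuousMap.id A, h.symm, rfl⟩
  | n + 1 => (ganeaHom h n).succ h

lemma secatLe_of_simplyDominatedBy (hd : SimplyDominatedBy ιY ιX) (h : secatLe ιX n) :
    secatLe ιY n := by
  obtain ⟨φ, s, hφ, hs⟩ := hd
  obtain ⟨σ₀, hσ⟩ := h
  let D := ganeaHom hφ.some n
  exact ⟨D.Φ.comp (σ₀.comp s), ((D.homotopic_of_section hσ).comp (.refl s)).trans hs⟩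

lemma relcatLe_of_relDominatedBy (hd : RelDominatedBy ιY ιX) (h : relcatLe ιX n) :
    relcatLe ιY n := by
  obtain ⟨φ, s, hφ, hs, hsι⟩ := hd
  obtain ⟨σ₀, hσ, hσα⟩ := h
  let D := ganeaHom hφ.some n
  refine ⟨D.Φ.comp (σ₀.comp s), ((D.homotopic_of_section hσ).comp (.refl s)).trans hs, ?_⟩
  rw [← D.comp_α]
  exact ((Homotopic.refl (D.Φ.comp σ₀)).comp hsι).trans ((Homotopic.refl D.Φ).comp hσα)

end Domination

section Pushout

variable {Z A X : Type u} [TopologicalSpace Z] [TopologicalSpace A] [TopologicalSpace X]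
  (ρ : C(Z, A)) (τ : C(Z, X)) {n : ℕ}

lemma exists_section_ganea_succ_inl (σ₁ : C(X, (ganea (HPO.inl ρ τ) n).G))
    (Hσ : Homotopy ((ganea (HPO.inl ρ τ) n).g.comp σ₁) (HPO.inr ρ τ)) :
    ∃ s : C(HPO ρ τ, (ganea (HPO.inl ρ τ) (n + 1)).G),
      ((ganea (HPO.inl ρ τ) (n + 1)).g.comp s).Homotopic (ContinuousMap.id _) ∧
      s.comp (HPO.inl ρ τ) = (ganea (HPO.inl ρ τ) (n + 1)).α := by
  let F := Hσ.compContinuousMap τ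
  let G := (HPO.canonHomotopy ρ τ).symm
  let H := ContinuousMap.Homotopy.refl ((HPO.inl ρ τ).comp ρ)
  let w := HPB.lift (ganea (HPO.inl ρ τ) n).g (HPO.inl ρ τ) (σ₁.comp τ) ρ (F.trans₃ G H)
  let s := HPO.map ρ τ (HPB.snd _ _) (HPB.fst _ _) w (ContinuousMap.id A) σ₁ (fun _ => rfl)
    (fun _ => rfl)
  let flip : C(Z × I, I × Z) := ⟨fun p => (σ p.2, p.1), by fun_prop⟩
  let HC : Homotopy (((ganea (HPO.inl ρ τ) (n + 1)).g.comp s).comp (HPO.cyl ρ τ))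
      ((ContinuousMap.id _).comp (HPO.cyl ρ τ)) :=
    ((F.shrinkToMiddle G H).compContinuousMap flip).cast rfl
      (by ext ⟨z, t⟩; exact congrArg (fun t => HPO.cyl ρ τ (z, t)) (unitInterval.symm_symm t))
  refine ⟨s, ⟨HPO.homotopy (.refl (HPO.inl ρ τ)) Hσ HC (fun s z => ?_) (fun s z => ?_)⟩, rfl⟩
  · change Homotopy.shrinkToMiddleFun F G H (s, σ 0, z) = _
    rw [unitInterval.symm_zero, Homotopy.shrinkToMiddleFun_right]
    rfl
  · change Homotopy.shrinkToMiddleFun F G H (s, σ 1, z) = _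
    rw [unitInterval.symm_one, Homotopy.shrinkToMiddleFun_left]
    rfl

lemma relcatLe_inl_succ {ι : C(A, X)} (hι : ((HPO.inr ρ τ).comp ι).Homotopic (HPO.inl ρ τ))
    (h : secatLe ι n) : relcatLe (HPO.inl ρ τ) (n + 1) := by
  obtain ⟨σ₀, hσ⟩ := h
  let D := ganeaHom hι.some n
  obtain ⟨s, hs, hsα⟩ := exists_section_ganea_succ_inl ρ τ (D.Φ.comp σ₀)
    (D.homotopic_of_section hσ).some
  exact ⟨s, hs, hsα ▸ .refl _⟩

end Pushout

lemma relcatLe_of_pushcatLe {A X : Type u} [TopologicalSpace A] {tX : TopologicalSpace X}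
    {ι : C(A, X)} {n : ℕ} (h : PushcatLe A X tX ι n) : relcatLe ι n := by
  induction h with
  | equiv ι hι =>
    obtain ⟨g, hιg, hgι⟩ := hι
    exact ⟨g, hιg, hgι⟩
  | step _ ρ τ ι' χ hpo hχ ih =>
    obtain ⟨_, he⟩ := hpo
    have hι : ((HPO.inr ρ τ).comp _).Homotopic (HPO.inl ρ τ) := he.homotopic_of_comp hχ
    exact relcatLe_of_relDominatedBy (relDominatedBy_of_isHEquiv he (.refl _))
      (relcatLe_inl_succ ρ τ hι ih.secatLe)
  | homotopic _ hh ih =>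
    refine relcatLe_of_relDominatedBy ?_ ih
    exact ⟨ContinuousMap.id _, ContinuousMap.id _, hh, .refl _, hh.symm⟩

end

/-- Characterization of `secat` and `relcat` by domination from maps of bounded
strong pushout category. -/
theorem secat_relcat_iff_dominated {A Y : Type u} [TopologicalSpace A] [TopologicalSpace Y]
    (ιY : C(A, Y)) (n : ℕ) :
    (secat ιY ≤ (n : ℕ∞) ↔ ∃ (X : Type u) (tX : TopologicalSpace X)
      (ιX : @ContinuousMap A X _ tX), @SimplyDominatedBy A Y X _ _ tX ιY ιX ∧
        @Pushcat A X _ tX ιX ≤ (n : ℕ∞)) ∧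
    (relcat ιY ≤ (n : ℕ∞) ↔ ∃ (X : Type u) (tX : TopologicalSpace X)
      (ιX : @ContinuousMap A X _ tX), @RelDominatedBy A Y X _ _ tX ιY ιX ∧
        @Pushcat A X _ tX ιX ≤ (n : ℕ∞)) := by
  simp only [secat, relcat, Pushcat, theNat_le_iff]
  refine ⟨⟨?_, ?_⟩, ⟨?_, ?_⟩⟩
  · rintro ⟨m, hm, σ₀, hσ⟩
    exact ⟨_, _, (ganea ιY m).α, ⟨_, σ₀, by rw [ganea_g_comp_α], hσ⟩, m, hm,
      pushcatLe_ganea_α ιY m⟩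
  · rintro ⟨X, tX, ιX, hd, m, hm, hpush⟩
    exact ⟨m, hm, secatLe_of_simplyDominatedBy hd (relcatLe_of_pushcatLe hpush).secatLe⟩
  · rintro ⟨m, hm, σ₀, hσ, hσα⟩
    exact ⟨_, _, (ganea ιY m).α, ⟨_, σ₀, by rw [ganea_g_comp_α], hσ, hσα⟩, m, hm,
      pushcatLe_ganea_α ιY m⟩
  · rintro ⟨X, tX, ιX, hd, m, hm, hpush⟩
    exact ⟨m, hm, relcatLe_of_relDominatedBy hd (relcatLe_of_pushcatLe hpush)⟩
end

section
/- Given a homotopy pushout square Z → A, Z → X, with resulting cofibre-type map χ : X → C and ι_C : A → C satisfying χ ∘ ι_X ≃ ι_C for a map ι_X : A → X, one has relcat(ι_C) ≤ relcat(ι_X) + 1. -/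
open unitInterval

universe u

/-!
A homotopy section `s` of the `n`-th Ganea map of `ιX` produces a section of the `(n+1)`-st
Ganea map of `ιC` compatible with `α_{n+1}`. The Ganea construction is functorial up to
homotopy along `χ`, giving `φ : G_n(ιX) → G_n(ιC)`. On the double mapping cylinder of `ρ` and `τ`
send `A` by `α_{n+1}`, `X` by `φ ∘ s` into the second leg of `G_{n+1}(ιC)`, and the cylinder
into its cylinder; after composing with `G_{n+1}(ιC) → Cc` this is homotopic to the comparison
map of the pushout, so precomposing with a homotopy inverse of that map gives the section, and
on `A` it is homotopic to `α_{n+1}`.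

The homotopies needed between maps out of a double mapping cylinder move the two ends along
homotopies and fill the cylinder by a reparametrisation of a concatenated homotopy.
-/

namespace ContinuousMap.Homotopy

variable {W Y : Type u} [TopologicalSpace W] [TopologicalSpace Y] {a b c d : C(W, Y)}

theorem trans_apply_left (F : a.Homotopy b) (G : b.Homotopy c) {s t : I}
    (hst : (s : ℝ) = t / 2) (w : W) : F.trans G (s, w) = F (t, w) := by
  show (if (s : ℝ) ≤ 1 / 2 then F.extend (2 * s) w else G.extend (2 * s - 1) w) = _
  rw [if_pos (by linarith [t.2.2]), show 2 * (s : ℝ) = t by linarith, F.extend_apply_coe]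

theorem trans_apply_right (F : a.Homotopy b) (G : b.Homotopy c) {s t : I}
    (hst : (s : ℝ) = (1 + t) / 2) (w : W) : F.trans G (s, w) = G (t, w) := by
  show (if (s : ℝ) ≤ 1 / 2 then F.extend (2 * s) w else G.extend (2 * s - 1) w) = _
  split_ifs with h
  · obtain rfl : t = 0 := Subtype.ext (by simp only [Set.Icc.coe_zero]; linarith [t.2.1])
    rw [F.extend_apply_of_one_le (by simp only [Set.Icc.coe_zero] at hst; linarith),
      G.apply_zero]
  · rw [show 2 * (s : ℝ) - 1 = t by linarith, G.extend_apply_coe]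

/-- At height `u` this maps `I` linearly onto `[u/2, 1 - u/4]`, so it squeezes
`P.trans (Q.trans R)` onto its middle part `Q`. -/
noncomputable def squeezeMiddle : C(I × I, I) :=
  ⟨fun p => ⟨(1 - p.2) * p.1 + p.2 * ((2 + p.1) / 4), by
      constructor <;> nlinarith [p.1.2.1, p.1.2.2, p.2.2.1, p.2.2.2]⟩, by fun_prop⟩

theorem exists_square_trans_trans (P : a.Homotopy b) (Q : b.Homotopy c) (R : d.Homotopy c) :
    ∃ S : C((W × I) × I, Y),
      (∀ w t, S ((w, t), 0) = P.trans (Q.trans R.symm) (t, w)) ∧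
      (∀ w t, S ((w, t), 1) = Q (t, w)) ∧
      (∀ w u, S ((w, 0), u) = P (u, w)) ∧
      (∀ w u, S ((w, 1), u) = R (u, w)) := by
  refine ⟨(P.trans (Q.trans R.symm)).toContinuousMap.comp
    ⟨fun p => (squeezeMiddle (p.1.2, p.2), p.1.1), by fun_prop⟩, ?_, ?_, ?_, ?_⟩
  · intro w t
    show P.trans (Q.trans R.symm) (squeezeMiddle (t, 0), w) = _
    congr
    ext
    simp [squeezeMiddle]
  · intro w t
    have ht : (t : ℝ) / 2 ∈ I := ⟨by linarith [t.2.1], by linarith [t.2.2]⟩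
    refine (trans_apply_right _ _ (t := ⟨t / 2, ht⟩) ?_ w).trans (trans_apply_left _ _ rfl w)
    simp only [squeezeMiddle, coe_mk, Set.Icc.coe_one, sub_self, zero_mul, one_mul, zero_add]
    ring
  · intro w u
    refine trans_apply_left _ _ ?_ w
    simp only [squeezeMiddle, coe_mk, Set.Icc.coe_zero, mul_zero, add_zero, zero_add]
    ring
  · intro w u
    have hu : 1 - (u : ℝ) / 2 ∈ I := ⟨by linarith [u.2.2], by linarith [u.2.1]⟩
    refine (trans_apply_right _ _ (t := ⟨1 - u / 2, hu⟩) ?_ w).trans ?_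
    · simp only [squeezeMiddle, coe_mk, Set.Icc.coe_one, mul_one]
      ring
    · rw [trans_apply_right _ _ (t := σ u) (by simp only [coe_symm_eq]; ring), symm_apply,
        unitInterval.symm_symm]

end ContinuousMap.Homotopy

namespace HPO

open ContinuousMap

variable {Z A B P : Type u} [TopologicalSpace Z] [TopologicalSpace A] [TopologicalSpace B]
  [TopologicalSpace P] {f : C(Z, A)} {g : C(Z, B)}

theorem desc_homotopic_of_square {h h' : C(A, P)} {k k' : C(B, P)}
    {H : (h.comp f).Homotopy (k.comp g)} {H' : (h'.comp f).Homotopy (k'.comp g)}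
    (Fh : h.Homotopy h') (Fk : k.Homotopy k') (S : C((Z × I) × I, P))
    (hS₀ : ∀ z t, S ((z, t), 0) = H (t, z)) (hS₁ : ∀ z t, S ((z, t), 1) = H' (t, z))
    (hSf : ∀ z u, S ((z, 0), u) = Fh (u, f z)) (hSg : ∀ z u, S ((z, 1), u) = Fk (u, g z)) :
    (desc f g h k H).Homotopic (desc f g h' k' H') := by
  let paths : A ⊕ ((Z × I) ⊕ B) → C(I, P) :=
    Sum.elim (Fh.toContinuousMap.comp prodSwap).curry
      (Sum.elim S.curry (Fk.toContinuousMap.comp prodSwap).curry)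
  have paths_sound : ∀ x y, HPORel f g x y → paths x = paths y := by
    rintro _ _ (z | z)
    · exact ContinuousMap.ext fun u => (hSf z u).symm
    · exact ContinuousMap.ext fun u => hSg z u
  let Φ : C(HPO f g, C(I, P)) :=
    ⟨Quot.lift paths paths_sound, continuous_quot_lift _ (by fun_prop)⟩
  refine ⟨⟨Φ.uncurry.comp prodSwap, Quot.ind ?_, Quot.ind ?_⟩⟩
  · rintro (a | ⟨⟨z, t⟩ | b⟩)
    exacts [Fh.apply_zero a, hS₀ z t, Fk.apply_zero b]
  · rintro (a | ⟨⟨z, t⟩ | b⟩)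
    exacts [Fh.apply_one a, hS₁ z t, Fk.apply_one b]

theorem desc_trans_trans_symm_homotopic {h h' : C(A, P)} {k k' : C(B, P)}
    (Fh : h.Homotopy h') (Fk : k.Homotopy k') (H : (h'.comp f).Homotopy (k'.comp g)) :
    (desc f g h k ((Fh.compContinuousMap f).trans (H.trans (Fk.compContinuousMap g).symm))).Homotopic
      (desc f g h' k' H) := by
  obtain ⟨S, hS₀, hS₁, hSf, hSg⟩ :=
    Homotopy.exists_square_trans_trans (Fh.compContinuousMap f) H (Fk.compContinuousMap g)
  exact desc_homotopic_of_square Fh Fk S hS₀ hS₁ hSf hSg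

theorem comp_desc {Q : Type u} [TopologicalSpace Q] {h : C(A, P)} {k : C(B, P)}
    (p : C(P, Q)) (H : (h.comp f).Homotopy (k.comp g)) :
    p.comp (desc f g h k H) = desc f g (p.comp h) (p.comp k) ((ContinuousMap.Homotopy.refl p).comp H) := by
  ext ⟨a | zt | b⟩ <;> rfl

variable (f g) in
def cylHomotopy : ((inl f g).comp f).Homotopy ((inr f g).comp g) where
  toFun p := cyl f g (p.2, p.1)
  map_zero_left z := (Quot.sound (HPORel.left z)).symm
  map_one_left z := Quot.sound (HPORel.right z)

end HPO

section Ganea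

variable {A C : Type u} [TopologicalSpace A] [TopologicalSpace C] (ι : C(A, C)) (n : ℕ)
  {Z B : Type u} [TopologicalSpace Z] [TopologicalSpace B] (f : C(Z, A)) (g : C(Z, B))
  (m : C(B, (ganea ι n).G)) (T : (ι.comp f).Homotopy (((ganea ι n).g.comp m).comp g))

def ganeaExtend : C(HPO f g, (ganea ι (n + 1)).G) :=
  HPO.desc f g (ganea ι (n + 1)).α ((HPO.inr _ _).comp m)
    ((HPO.cylHomotopy _ _).compContinuousMap (HPB.lift _ ι (m.comp g) f T.symm))

theorem ganea_succ_g_comp_ganeaExtend :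
    (ganea ι (n + 1)).g.comp (ganeaExtend ι n f g m T) =
      HPO.desc f g ι ((ganea ι n).g.comp m) T := by
  ext ⟨a | ⟨z, t⟩ | b⟩
  · rfl
  · show T (σ (σ t), z) = T (t, z)
    rw [unitInterval.symm_symm]
  · rfl

theorem exists_ganea_map {X : Type u} [TopologicalSpace X] {ιX : C(A, X)} {χ : C(X, C)}
    (hc : (χ.comp ιX).Homotopic ι) :
    ∃ φ : C((ganea ιX n).G, (ganea ι n).G),
      ((ganea ι n).g.comp φ).Homotopic (χ.comp (ganea ιX n).g) := by
  obtain ⟨hc⟩ := hc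
  induction n with
  | zero => exact ⟨ContinuousMap.id _, ⟨hc.symm⟩⟩
  | succ n ih =>
    obtain ⟨φ, ⟨Hφ⟩⟩ := ih
    have h := HPO.desc_trans_trans_symm_homotopic hc.symm Hφ
      ((ContinuousMap.Homotopy.refl χ).comp (HPB.pathHomotopy (ganea ιX n).g ιX))
    rw [← HPO.comp_desc, ← ganea_succ_g_comp_ganeaExtend] at h
    exact ⟨_, h⟩

end Ganea

lemma theNat_antitone : Antitone theNat :=
  fun _ _ h => sInf_le_sInf (Set.image_mono h)

lemma theNat_le_add_one {P Q : ℕ → Prop} (h : ∀ n, P n → Q (n + 1)) :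
    theNat Q ≤ theNat P + 1 := by
  rcases Set.eq_empty_or_nonempty ((Nat.cast : ℕ → ℕ∞) '' {n | P n}) with hP | hP
  · simp [theNat, hP]
  · obtain ⟨n, hn, hmin⟩ := csInf_mem hP
    calc theNat Q ≤ ((n + 1 : ℕ) : ℕ∞) := sInf_le ⟨n + 1, h n hn, rfl⟩
      _ = theNat P + 1 := by rw [theNat, ← hmin, Nat.cast_add, Nat.cast_one]

theorem secat_le_relcat {A X : Type u} [TopologicalSpace A] [TopologicalSpace X] (ι : C(A, X)) :
    secat ι ≤ relcat ι :=
  theNat_antitone fun _ ⟨s, hs, _⟩ => ⟨s, hs⟩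

section Cone

open ContinuousMap

variable {Z A X Cc : Type u} [TopologicalSpace Z] [TopologicalSpace A] [TopologicalSpace X]
  [TopologicalSpace Cc] {ρ : C(Z, A)} {τ : C(Z, X)} {ιX : C(A, X)} {ιC : C(A, Cc)} {χ : C(X, Cc)}

theorem relcatLe_succ_of_secatLe (hpo : IsHPO ρ τ ιC χ) (hc : (χ.comp ιX).Homotopic ιC) {n : ℕ}
    (h : secatLe ιX n) : relcatLe ιC (n + 1) := by
  obtain ⟨s, ⟨hs⟩⟩ := h
  obtain ⟨K, e, he₁, he₂⟩ := hpo
  obtain ⟨φ, ⟨Hφ⟩⟩ := exists_ganea_map ιC n hc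
  let J : ((ganea ιC n).g.comp (φ.comp s)).Homotopy χ :=
    (Hφ.compContinuousMap s).trans (((ContinuousMap.Homotopy.refl χ).comp hs).cast rfl (comp_id χ))
  have hS := HPO.desc_trans_trans_symm_homotopic (.refl ιC) J K
  rw [← ganea_succ_g_comp_ganeaExtend] at hS
  set S := ganeaExtend ιC n ρ τ (φ.comp s) _
  refine ⟨S.comp e, (hS.comp (Homotopic.refl e)).trans he₁, ?_⟩
  exact (Homotopic.refl S).comp (he₂.comp (Homotopic.refl (HPO.inl ρ τ)))

theorem relcat_le_secat_add_one_of_isHPO (hpo : IsHPO ρ τ ιC χ)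
    (hc : (χ.comp ιX).Homotopic ιC) : relcat ιC ≤ secat ιX + 1 :=
  theNat_le_add_one fun _ => relcatLe_succ_of_secatLe hpo hc

end Cone

/-- Attaching a cone increases relative category by at most one. -/
theorem relcat_cone_le {Z A X Cc : Type u} [TopologicalSpace Z] [TopologicalSpace A]
    [TopologicalSpace X] [TopologicalSpace Cc] (ρ : C(Z, A)) (τ : C(Z, X)) (ιX : C(A, X))
    (ιC : C(A, Cc)) (χ : C(X, Cc)) (hpo : IsHPO ρ τ ιC χ)
    (hc : (χ.comp ιX).Homotopic ιC) :
    relcat ιC ≤ relcat ιX + 1 :=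
  (relcat_le_secat_add_one_of_isHPO hpo hc).trans (by gcongr; exact secat_le_relcat ιX)
end
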